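/- arXiv:1509.01513 — 3 statements merged into one kernel-verified Lean document; each statement's English description precedes it below -/
import Mathlib

section
/- For every function f in H^1((a,b)) that is nonnegative, and for all x,y in (a,b), one has |f(x)^{3/2} - f(y)^{3/2}| ≤ (3/2)·|x-y|^{1/4}·‖f‖_{L^2}^{1/2}·‖f'‖_{L^2}. -/
open MeasureTheory Set
set_option maxHeartbeats 1000000

lemma cs_aux {μ : Measure ℝ} (u v : ℝ → ℝ) (hu : 0 ≤ᵐ[μ] u) (hv : 0 ≤ᵐ[μ] v)
    (hu2 : MemLp u 2 μ) (hv2 : MemLp v 2 μ) :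
    ∫ t, u t * v t ∂μ ≤ (∫ t, u t ^ 2 ∂μ) ^ (1/2:ℝ) * (∫ t, v t ^ 2 ∂μ) ^ (1/2:ℝ) := by
  have h2 : ENNReal.ofReal (2:ℝ) = 2 := by norm_num
  have hpq : Real.HolderConjugate 2 2 := Real.HolderConjugate.two_two
  have H := integral_mul_le_Lp_mul_Lq_of_nonneg hpq hu hv (h2 ▸ hu2) (h2 ▸ hv2)
  have e : ∀ w : ℝ → ℝ, (∫ t, w t ^ (2:ℝ) ∂μ) = ∫ t, w t ^ 2 ∂μ := by
    intro w
    refine integral_congr_ae (Filter.Eventually.of_forall fun t => ?_)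
    show w t ^ (2:ℝ) = w t ^ 2
    rw [show (2:ℝ) = ((2:ℕ):ℝ) by norm_num, Real.rpow_natCast]
  rw [e, e] at H
  exact H

lemma key (a b : ℝ) (hab : a < b) (f f' : ℝ → ℝ)
    (hderiv : ∀ x ∈ Ioo a b, HasDerivAt f (f' x) x)
    (hpos : ∀ x ∈ Ioo a b, 0 ≤ f x)
    (hf2 : IntegrableOn (fun z => (f z)^2) (Ioo a b))
    (hf'2 : IntegrableOn (fun z => (f' z)^2) (Ioo a b))
    (x : ℝ) (hx : x ∈ Ioo a b) (y : ℝ) (hy : y ∈ Ioo a b) (hyx : y ≤ x) :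
    |f x ^ (3/2 : ℝ) - f y ^ (3/2 : ℝ)| ≤
      (3/2) * |x - y| ^ (1/4 : ℝ) *
        (∫ z in Ioo a b, (f z)^2) ^ (1/4 : ℝ) *
        (∫ z in Ioo a b, (f' z)^2) ^ (1/2 : ℝ) := by
  set I := ∫ z in Ioo a b, (f z)^2 with hI_def
  set J := ∫ z in Ioo a b, (f' z)^2 with hJ_def
  have hsub : Ioc y x ⊆ Ioo a b := fun z hz => ⟨lt_trans hy.1 hz.1, lt_of_le_of_lt hz.2 hx.2⟩
  have hsubIcc : Icc y x ⊆ Ioo a b :=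
    fun z hz => ⟨lt_of_lt_of_le hy.1 hz.1, lt_of_le_of_lt hz.2 hx.2⟩
  have hfin : volume (Ioc y x) < ⊤ := by
    rw [Real.volume_Ioc]; exact ENNReal.ofReal_lt_top
  have hfc : ContinuousOn f (Icc y x) :=
    fun t ht => ((hderiv t (hsubIcc ht)).continuousAt).continuousWithinAt
  -- measurability of f'
  have hf'meas : AEStronglyMeasurable f' (volume.restrict (Ioc y x)) := by
    refine (measurable_deriv f).aestronglyMeasurable.congr ?_
    filter_upwards [ae_restrict_mem measurableSet_Ioc] with t ht
    exact (hderiv t (hsub ht)).deriv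
  have hf'2s : IntegrableOn (fun t => f' t ^ 2) (Ioc y x) := hf'2.mono_set hsub
  have hf2s : IntegrableOn (fun t => f t ^ 2) (Ioc y x) := hf2.mono_set hsub
  have hf'int : IntegrableOn f' (Ioc y x) := by
    have h1 : IntegrableOn (fun _ => (1:ℝ)) (Ioc y x) := integrableOn_const hfin.ne
    have h2 : IntegrableOn (fun t => ((1:ℝ) + f' t ^ 2)/2) (Ioc y x) := (h1.add hf'2s).div_const 2
    refine Integrable.mono' h2 hf'meas ?_
    refine Filter.Eventually.of_forall fun t => ?_
    rw [Real.norm_eq_abs]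
    nlinarith [sq_abs (f' t), sq_nonneg (|f' t| - 1)]
  have hfint : IntegrableOn f (Ioc y x) :=
    (hfc.integrableOn_Icc).mono_set Ioc_subset_Icc_self
  -- u := sqrt f
  set u : ℝ → ℝ := fun t => f t ^ (1/2:ℝ) with hu_def
  have huc : ContinuousOn u (Icc y x) := hfc.rpow_const (fun t ht => Or.inr (by norm_num))
  obtain ⟨C, hC⟩ := isCompact_Icc.exists_bound_of_continuousOn huc
  have humeas : AEStronglyMeasurable u (volume.restrict (Ioc y x)) :=
    (huc.mono Ioc_subset_Icc_self).aestronglyMeasurable measurableSet_Ioc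
  have hu_sq : ∀ t ∈ Ioc y x, u t ^ 2 = f t := by
    intro t ht
    rw [hu_def]
    rw [← Real.rpow_natCast (f t ^ (1/2:ℝ)) 2, ← Real.rpow_mul (hpos t (hsub ht))]
    norm_num
  have hu2 : MemLp u 2 (volume.restrict (Ioc y x)) := by
    rw [memLp_two_iff_integrable_sq humeas]
    refine hfint.congr ?_
    filter_upwards [ae_restrict_mem measurableSet_Ioc] with t ht
    exact (hu_sq t ht).symm
  have hv2 : MemLp (fun t => |f' t|) 2 (volume.restrict (Ioc y x)) := by
    have habsmeas : AEStronglyMeasurable (fun t => |f' t|) (volume.restrict (Ioc y x)) :=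
      hf'meas.norm
    rw [memLp_two_iff_integrable_sq habsmeas]
    refine hf'2s.congr (Filter.Eventually.of_forall fun t => (sq_abs (f' t)).symm)
  -- FTC
  have hg' : ∀ t ∈ uIcc y x, HasDerivAt (fun s => f s ^ (3/2:ℝ)) (3/2 * f t ^ (1/2:ℝ) * f' t) t := by
    intro t ht
    rw [uIcc_of_le hyx] at ht
    have h1 := hderiv t (hsubIcc ht)
    have h2 := (Real.hasDerivAt_rpow_const (x := f t) (p := 3/2) (Or.inr (by norm_num))).comp t h1
    rw [show (3/2:ℝ) - 1 = 1/2 by norm_num] at h2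
    exact h2
  have hintg' : IntervalIntegrable (fun t => 3/2 * f t ^ (1/2:ℝ) * f' t) volume y x := by
    rw [intervalIntegrable_iff, uIoc_of_le hyx]
    refine Integrable.mono' (g := fun t => (3/2 * C) * |f' t|) (hf'int.abs.const_mul _)
      ((humeas.const_mul (3/2)).mul hf'meas) ?_
    filter_upwards [ae_restrict_mem measurableSet_Ioc] with t ht
    have hCt : |u t| ≤ C := by
      have := hC t (Ioc_subset_Icc_self ht)
      rwa [Real.norm_eq_abs] at this
    have h0 : |(3:ℝ)/2 * u t * f' t| = 3/2 * |u t| * |f' t| := by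
      rw [abs_mul, abs_mul, abs_of_nonneg (by norm_num : (0:ℝ) ≤ 3/2)]
    rw [Real.norm_eq_abs, h0, mul_assoc, mul_assoc]
    have : |u t| * |f' t| ≤ C * |f' t| := mul_le_mul_of_nonneg_right hCt (abs_nonneg _)
    nlinarith [this]
  have hftc := intervalIntegral.integral_eq_sub_of_hasDerivAt hg' hintg'
  -- abs of the integral
  have habs : |f x ^ (3/2:ℝ) - f y ^ (3/2:ℝ)|
      ≤ ∫ t in Ioc y x, |3/2 * f t ^ (1/2:ℝ) * f' t| := by
    rw [← hftc, intervalIntegral.integral_of_le hyx]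
    have h1 := intervalIntegral.abs_integral_le_integral_abs
      (μ := volume) (f := fun t => 3/2 * f t ^ (1/2:ℝ) * f' t) (a := y) (b := x) hyx
    rw [intervalIntegral.integral_of_le hyx, intervalIntegral.integral_of_le hyx] at h1
    simpa using h1
  -- rewrite the integrand
  have habs2 : (∫ t in Ioc y x, |3/2 * f t ^ (1/2:ℝ) * f' t|)
      = 3/2 * ∫ t in Ioc y x, u t * |f' t| := by
    rw [← integral_const_mul]
    refine integral_congr_ae ?_
    filter_upwards [ae_restrict_mem measurableSet_Ioc] with t ht
    have hu0 : 0 ≤ u t := Real.rpow_nonneg (hpos t (hsub ht)) _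
    rw [abs_mul, abs_mul, abs_of_nonneg (by norm_num : (0:ℝ) ≤ 3/2), abs_of_nonneg hu0,
      mul_assoc]
  -- Cauchy-Schwarz 1
  have hcs1 := cs_aux u (fun t => |f' t|) ?_
    (Filter.Eventually.of_forall fun t => abs_nonneg _) hu2 hv2
  rotate_left
  · filter_upwards [ae_restrict_mem measurableSet_Ioc] with t ht
    exact Real.rpow_nonneg (hpos t (hsub ht)) _
  have e1 : (∫ t in Ioc y x, u t ^ 2) = ∫ t in Ioc y x, f t := by
    refine integral_congr_ae ?_
    filter_upwards [ae_restrict_mem measurableSet_Ioc] with t ht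
    exact hu_sq t ht
  have e2 : (∫ t in Ioc y x, |f' t| ^ 2) = ∫ t in Ioc y x, f' t ^ 2 := by
    refine integral_congr_ae (Filter.Eventually.of_forall fun t => sq_abs _)
  rw [e1, e2] at hcs1
  -- Cauchy-Schwarz 2 : ∫ f ≤ (∫ f²)^{1/2} (x-y)^{1/2}
  have hmemf : MemLp f 2 (volume.restrict (Ioc y x)) := by
    rw [memLp_two_iff_integrable_sq
      ((hfc.mono Ioc_subset_Icc_self).aestronglyMeasurable measurableSet_Ioc)]
    exact hf2s
  have hcs2 := cs_aux f (fun _ => (1:ℝ)) ?_ (Filter.Eventually.of_forall fun t => zero_le_one)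
    hmemf (memLp_const 1)
  rotate_left
  · filter_upwards [ae_restrict_mem measurableSet_Ioc] with t ht
    exact hpos t (hsub ht)
  have e3 : (∫ t in Ioc y x, f t * 1) = ∫ t in Ioc y x, f t := by simp
  have e4 : (∫ _t in Ioc y x, (1:ℝ) ^ 2) = x - y := by
    simp [Real.volume_Ioc, ENNReal.toReal_ofReal (sub_nonneg.2 hyx), hyx]
  rw [e3, e4] at hcs2
  -- monotonicity of the integrals
  have hnn2 : (0:ℝ → ℝ) ≤ᵐ[volume.restrict (Ioo a b)] fun z => f z ^ 2 :=
    Filter.Eventually.of_forall fun t => sq_nonneg _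
  have hnn3 : (0:ℝ → ℝ) ≤ᵐ[volume.restrict (Ioo a b)] fun z => f' z ^ 2 :=
    Filter.Eventually.of_forall fun t => sq_nonneg _
  have hS2 : (∫ t in Ioc y x, f t ^ 2) ≤ I :=
    setIntegral_mono_set hf2 hnn2 (HasSubset.Subset.eventuallyLE hsub)
  have hS3 : (∫ t in Ioc y x, f' t ^ 2) ≤ J :=
    setIntegral_mono_set hf'2 hnn3 (HasSubset.Subset.eventuallyLE hsub)
  have hI0 : 0 ≤ I := setIntegral_nonneg measurableSet_Ioo fun t _ => sq_nonneg _
  have hJ0 : 0 ≤ J := setIntegral_nonneg measurableSet_Ioo fun t _ => sq_nonneg _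
  have hS20 : 0 ≤ ∫ t in Ioc y x, f t ^ 2 :=
    setIntegral_nonneg measurableSet_Ioc fun t _ => sq_nonneg _
  have hS30 : 0 ≤ ∫ t in Ioc y x, f' t ^ 2 :=
    setIntegral_nonneg measurableSet_Ioc fun t _ => sq_nonneg _
  have hS10 : 0 ≤ ∫ t in Ioc y x, f t :=
    setIntegral_nonneg measurableSet_Ioc fun t ht => hpos t (hsub ht)
  have hw0 : (0:ℝ) ≤ x - y := sub_nonneg.2 hyx
  -- chain
  have step1 : (∫ t in Ioc y x, f t) ^ (1/2:ℝ) ≤ (x - y) ^ (1/4:ℝ) * I ^ (1/4:ℝ) := by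
    have h1 : (∫ t in Ioc y x, f t) ≤ I ^ (1/2:ℝ) * (x - y) ^ (1/2:ℝ) := by
      refine hcs2.trans ?_
      exact mul_le_mul_of_nonneg_right (Real.rpow_le_rpow hS20 hS2 (by norm_num))
        (Real.rpow_nonneg hw0 _)
    calc (∫ t in Ioc y x, f t) ^ (1/2:ℝ)
        ≤ (I ^ (1/2:ℝ) * (x - y) ^ (1/2:ℝ)) ^ (1/2:ℝ) :=
          Real.rpow_le_rpow hS10 h1 (by norm_num)
      _ = (x - y) ^ (1/4:ℝ) * I ^ (1/4:ℝ) := by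
          rw [Real.mul_rpow (Real.rpow_nonneg hI0 _) (Real.rpow_nonneg hw0 _),
            ← Real.rpow_mul hI0, ← Real.rpow_mul hw0]
          norm_num
          ring
  have step2 : (∫ t in Ioc y x, f' t ^ 2) ^ (1/2:ℝ) ≤ J ^ (1/2:ℝ) :=
    Real.rpow_le_rpow hS30 hS3 (by norm_num)
  have habsxy : |x - y| = x - y := abs_of_nonneg hw0
  calc |f x ^ (3/2:ℝ) - f y ^ (3/2:ℝ)|
      ≤ 3/2 * ∫ t in Ioc y x, u t * |f' t| := by rw [← habs2]; exact habs
    _ ≤ 3/2 * ((∫ t in Ioc y x, f t) ^ (1/2:ℝ) * (∫ t in Ioc y x, f' t ^ 2) ^ (1/2:ℝ)) := by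
        exact mul_le_mul_of_nonneg_left hcs1 (by norm_num)
    _ ≤ 3/2 * (((x - y) ^ (1/4:ℝ) * I ^ (1/4:ℝ)) * J ^ (1/2:ℝ)) := by
        refine mul_le_mul_of_nonneg_left ?_ (by norm_num)
        exact mul_le_mul step1 step2 (Real.rpow_nonneg hS30 _)
          (by positivity)
    _ = 3/2 * |x - y| ^ (1/4:ℝ) * I ^ (1/4:ℝ) * J ^ (1/2:ℝ) := by
        rw [habsxy]; ring

theorem stmt0 (a b : ℝ) (hab : a < b) (f f' : ℝ → ℝ)
    (hderiv : ∀ x ∈ Ioo a b, HasDerivAt f (f' x) x)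
    (hpos : ∀ x ∈ Ioo a b, 0 ≤ f x)
    (hf2 : IntegrableOn (fun z => (f z)^2) (Ioo a b))
    (hf'2 : IntegrableOn (fun z => (f' z)^2) (Ioo a b)) :
    ∀ x ∈ Ioo a b, ∀ y ∈ Ioo a b,
      |f x ^ (3/2 : ℝ) - f y ^ (3/2 : ℝ)| ≤
        (3/2) * |x - y| ^ (1/4 : ℝ) *
          (∫ z in Ioo a b, (f z)^2) ^ (1/4 : ℝ) *
          (∫ z in Ioo a b, (f' z)^2) ^ (1/2 : ℝ) := by
  intro x hx y hy
  rcases le_total y x with h | h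
  · exact key a b hab f f' hderiv hpos hf2 hf'2 x hx y hy h
  · rw [abs_sub_comm, abs_sub_comm x y]
    exact key a b hab f f' hderiv hpos hf2 hf'2 y hy x hx h
end

section
/- Let K ≥ 2, δ > 0, and let z_{1/2}, z_{3/2}, ..., z_{K-1/2} be positive reals, extended by z_{-1/2} := z_{1/2} and z_{K+1/2} := z_{K-1/2}. Set z_k := (z_{k+1/2}+z_{k-1/2})/2 for k = 1,...,K−1. Then δ·∑_{k=1}^{K-1} z_k ((z_{k+1/2} − z_{k-1/2})/δ)^4 ≤ (9/4)·δ·∑_{κ ∈ {1/2,...,K−1/2}} z_κ³ ((z_{κ+1} − 2z_κ + z_{κ−1})/δ²)². -/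
open Finset

private lemma sum_shift' (g : ℕ → ℝ) (K : ℕ) :
    ∑ j ∈ range K, g (j+1) = ∑ j ∈ Icc 1 K, g j := by
  induction K with
  | zero => simp
  | succ n ih =>
    rw [Finset.sum_range_succ, ih]
    have h1 : Icc 1 (n+1) = insert (n+1) (Icc 1 n) := by
      ext x; simp only [Finset.mem_Icc, Finset.mem_insert]; omega
    rw [h1, Finset.sum_insert (by simp)]
    ring

private lemma range_split' (K : ℕ) (hK : 1 ≤ K) (g : ℕ → ℝ) :
    ∑ j ∈ range K, g j = g 0 + ∑ j ∈ Icc 1 (K-1), g j := by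
  have h : range K = insert 0 (Icc 1 (K-1)) := by
    ext x; simp only [Finset.mem_range, Finset.mem_Icc, Finset.mem_insert]; omega
  rw [h, Finset.sum_insert (by simp)]

private lemma Icc_split' (K : ℕ) (hK : 1 ≤ K) (g : ℕ → ℝ) :
    ∑ j ∈ Icc 1 K, g j = (∑ j ∈ Icc 1 (K-1), g j) + g K := by
  have h : Icc 1 K = insert K (Icc 1 (K-1)) := by
    ext x; simp only [Finset.mem_Icc, Finset.mem_insert]; omega
  rw [h, Finset.sum_insert (by simp only [Finset.mem_Icc]; omega)]
  ring

private lemma quartic_aux (x y : ℝ) : (x^2 + x*y + y^2)^2 ≤ (9/2) * (x^4 + y^4) := by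
  have hpos : (0:ℝ) ≤ x^2 + x*y + y^2 := by nlinarith [sq_nonneg (x+y), sq_nonneg x, sq_nonneg y]
  nlinarith [mul_nonneg (sq_nonneg (x - y)) hpos, sq_nonneg (x^2 - y^2)]

theorem stmt6 (K : ℕ) (hK : 2 ≤ K) (δ : ℝ) (hδ : 0 < δ) (z : ℤ → ℝ)
    (hzpos : ∀ j : ℤ, 0 ≤ j → j < (K : ℤ) → 0 < z j)
    (hlo : z (-1) = z 0) (hhi : z (K : ℤ) = z ((K : ℤ) - 1)) :
    δ * ∑ k ∈ Finset.Icc 1 (K - 1),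
        ((z (k : ℤ) + z ((k : ℤ) - 1)) / 2) * ((z (k : ℤ) - z ((k : ℤ) - 1)) / δ)^4 ≤
      (9/4) * (δ * ∑ j ∈ Finset.range K,
        (z (j : ℤ))^3 * ((z ((j : ℤ) + 1) - 2 * z (j : ℤ) + z ((j : ℤ) - 1)) / δ^2)^2) := by
  have hK1 : 1 ≤ K := by omega
  set a : ℤ → ℝ := fun j => z j - z (j - 1) with ha_def
  have ha0 : a 0 = 0 := by simp [ha_def, hlo]
  have haK : a (K : ℤ) = 0 := by simp [ha_def, hhi]
  set S : ℝ := ∑ k ∈ Icc 1 (K-1), ((z (k:ℤ) + z ((k:ℤ)-1))/2) * (a (k:ℤ))^4 with hS_def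
  set Q : ℝ := ∑ j ∈ range K, (z (j:ℤ))^3 * (a ((j:ℤ)+1) - a (j:ℤ))^2 with hQ_def
  -- positivity facts
  have hz : ∀ j ∈ range K, 0 < z (j:ℤ) := by
    intro j hj
    exact hzpos _ (by exact_mod_cast Nat.zero_le j) (by exact_mod_cast mem_range.mp hj)
  have hzI : ∀ k ∈ Icc 1 (K-1), 0 < z (k:ℤ) ∧ 0 < z ((k:ℤ)-1) := by
    intro k hk
    rw [mem_Icc] at hk
    constructor
    · exact hzpos _ (by omega) (by omega)
    · exact hzpos _ (by omega) (by omega)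
  have hS0 : 0 ≤ S := by
    apply Finset.sum_nonneg
    intro k hk
    obtain ⟨h1, h2⟩ := hzI k hk
    positivity
  have hQ0 : 0 ≤ Q := by
    apply Finset.sum_nonneg
    intro j hj
    have := hz j hj
    positivity
  -- key identity A: 2S = ∑_{Icc} (z_k² - z_{k-1}²) a_k³
  have keyA : 2 * S = ∑ k ∈ Icc 1 (K-1),
      ((z (k:ℤ))^2 - (z ((k:ℤ)-1))^2) * (a (k:ℤ))^3 := by
    rw [hS_def, Finset.mul_sum]
    refine Finset.sum_congr rfl fun k _ => ?_
    simp only [ha_def]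
    ring
  -- key identity B: abel summation
  have keyB : ∑ k ∈ Icc 1 (K-1), ((z (k:ℤ))^2 - (z ((k:ℤ)-1))^2) * (a (k:ℤ))^3
      = ∑ j ∈ range K, (z (j:ℤ))^2 * ((a (j:ℤ))^3 - (a ((j:ℤ)+1))^3) := by
    have e1 : ∑ j ∈ range K, (z (j:ℤ))^2 * (a (j:ℤ))^3
        = ∑ j ∈ Icc 1 (K-1), (z (j:ℤ))^2 * (a (j:ℤ))^3 := by
      rw [range_split' K hK1]
      simp [ha0]
    have e2 : ∑ j ∈ range K, (z (j:ℤ))^2 * (a ((j:ℤ)+1))^3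
        = ∑ j ∈ Icc 1 (K-1), (z ((j:ℤ)-1))^2 * (a (j:ℤ))^3 := by
      have := sum_shift' (fun j => (z ((j:ℤ)-1))^2 * (a (j:ℤ))^3) K
      simp only [Nat.cast_add, Nat.cast_one, add_sub_cancel_right] at this
      rw [this, Icc_split' K hK1]
      simp [haK]
    calc ∑ k ∈ Icc 1 (K-1), ((z (k:ℤ))^2 - (z ((k:ℤ)-1))^2) * (a (k:ℤ))^3
        = (∑ j ∈ Icc 1 (K-1), (z (j:ℤ))^2 * (a (j:ℤ))^3)
          - ∑ j ∈ Icc 1 (K-1), (z ((j:ℤ)-1))^2 * (a (j:ℤ))^3 := by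
          rw [← Finset.sum_sub_distrib]
          exact Finset.sum_congr rfl fun k _ => by ring
      _ = ∑ j ∈ range K, (z (j:ℤ))^2 * ((a (j:ℤ))^3 - (a ((j:ℤ)+1))^3) := by
          rw [← e1, ← e2, ← Finset.sum_sub_distrib]
          exact Finset.sum_congr rfl fun j _ => by ring
  -- key identity B': ∑ z_j (a_j⁴ + a_{j+1}⁴) = 2S
  have keyB' : ∑ j ∈ range K, z (j:ℤ) * ((a (j:ℤ))^4 + (a ((j:ℤ)+1))^4) = 2 * S := by
    have e1 : ∑ j ∈ range K, z (j:ℤ) * (a (j:ℤ))^4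
        = ∑ j ∈ Icc 1 (K-1), z (j:ℤ) * (a (j:ℤ))^4 := by
      rw [range_split' K hK1]
      simp [ha0]
    have e2 : ∑ j ∈ range K, z (j:ℤ) * (a ((j:ℤ)+1))^4
        = ∑ j ∈ Icc 1 (K-1), z ((j:ℤ)-1) * (a (j:ℤ))^4 := by
      have := sum_shift' (fun j => z ((j:ℤ)-1) * (a (j:ℤ))^4) K
      simp only [Nat.cast_add, Nat.cast_one, add_sub_cancel_right] at this
      rw [this, Icc_split' K hK1]
      simp [haK]
    calc ∑ j ∈ range K, z (j:ℤ) * ((a (j:ℤ))^4 + (a ((j:ℤ)+1))^4)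
        = (∑ j ∈ range K, z (j:ℤ) * (a (j:ℤ))^4)
          + ∑ j ∈ range K, z (j:ℤ) * (a ((j:ℤ)+1))^4 := by
          rw [← Finset.sum_add_distrib]
          exact Finset.sum_congr rfl fun j _ => by ring
      _ = ∑ k ∈ Icc 1 (K-1), (z (k:ℤ) + z ((k:ℤ)-1)) * (a (k:ℤ))^4 := by
          rw [e1, e2, ← Finset.sum_add_distrib]
          exact Finset.sum_congr rfl fun k _ => by ring
      _ = 2 * S := by
          rw [hS_def, Finset.mul_sum]
          exact Finset.sum_congr rfl fun k _ => by ring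
  -- Cauchy-Schwarz
  set f : ℕ → ℝ := fun j => Real.sqrt ((z (j:ℤ))^3) * (a ((j:ℤ)+1) - a (j:ℤ)) with hf_def
  set g : ℕ → ℝ := fun j => Real.sqrt (z (j:ℤ)) *
    ((a (j:ℤ))^2 + a (j:ℤ) * a ((j:ℤ)+1) + (a ((j:ℤ)+1))^2) with hg_def
  have hfg : ∑ j ∈ range K, f j * g j = -(2 * S) := by
    rw [keyA, keyB, ← Finset.sum_neg_distrib]
    refine Finset.sum_congr rfl fun j hj => ?_
    have hzj := (hz j hj).le
    have hsq : Real.sqrt ((z (j:ℤ))^3) * Real.sqrt (z (j:ℤ)) = (z (j:ℤ))^2 := by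
      rw [← Real.sqrt_mul (by positivity)]
      have : (z (j:ℤ))^3 * z (j:ℤ) = ((z (j:ℤ))^2)^2 := by ring
      rw [this, Real.sqrt_sq (by positivity)]
    simp only [hf_def, hg_def]
    calc Real.sqrt ((z (j:ℤ))^3) * (a ((j:ℤ)+1) - a (j:ℤ)) *
        (Real.sqrt (z (j:ℤ)) * ((a (j:ℤ))^2 + a (j:ℤ) * a ((j:ℤ)+1) + (a ((j:ℤ)+1))^2))
        = (Real.sqrt ((z (j:ℤ))^3) * Real.sqrt (z (j:ℤ))) * ((a ((j:ℤ)+1) - a (j:ℤ)) *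
          ((a (j:ℤ))^2 + a (j:ℤ) * a ((j:ℤ)+1) + (a ((j:ℤ)+1))^2)) := by ring
      _ = -((z (j:ℤ))^2 * ((a (j:ℤ))^3 - (a ((j:ℤ)+1))^3)) := by rw [hsq]; ring
  have hf2 : ∑ j ∈ range K, (f j)^2 = Q := by
    rw [hQ_def]
    refine Finset.sum_congr rfl fun j hj => ?_
    have hzj := (hz j hj).le
    simp only [hf_def]
    rw [mul_pow, Real.sq_sqrt (by positivity)]
  have hg2 : ∑ j ∈ range K, (g j)^2 ≤ 9 * S := by
    have step : ∑ j ∈ range K, (g j)^2 ≤ ∑ j ∈ range K,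
        (9/2) * (z (j:ℤ) * ((a (j:ℤ))^4 + (a ((j:ℤ)+1))^4)) := by
      refine Finset.sum_le_sum fun j hj => ?_
      have hzj := (hz j hj).le
      simp only [hg_def]
      rw [mul_pow, Real.sq_sqrt hzj]
      have key := quartic_aux (a (j:ℤ)) (a ((j:ℤ)+1))
      calc z (j:ℤ) * ((a (j:ℤ))^2 + a (j:ℤ) * a ((j:ℤ)+1) + (a ((j:ℤ)+1))^2)^2
          ≤ z (j:ℤ) * ((9/2) * ((a (j:ℤ))^4 + (a ((j:ℤ)+1))^4)) :=
            mul_le_mul_of_nonneg_left key hzj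
        _ = (9/2) * (z (j:ℤ) * ((a (j:ℤ))^4 + (a ((j:ℤ)+1))^4)) := by ring
    rw [← Finset.mul_sum, keyB'] at step
    linarith
  have hCS := Finset.sum_mul_sq_le_sq_mul_sq (range K) f g
  rw [hfg, hf2] at hCS
  have hmain : S ≤ (9/4) * Q := by
    have h4 : 4 * S^2 ≤ Q * (9 * S) := by
      calc 4 * S^2 = (-(2*S))^2 := by ring
        _ ≤ Q * ∑ j ∈ range K, (g j)^2 := hCS
        _ ≤ Q * (9 * S) := by
            apply mul_le_mul_of_nonneg_left hg2 hQ0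
    rcases eq_or_lt_of_le hS0 with h | h
    · rw [← h]; positivity
    · nlinarith
  -- relate to the goal
  have hL : δ * ∑ k ∈ Icc 1 (K-1),
      ((z (k:ℤ) + z ((k:ℤ)-1))/2) * ((z (k:ℤ) - z ((k:ℤ)-1))/δ)^4 = S / δ^3 := by
    rw [hS_def, Finset.mul_sum, Finset.sum_div]
    refine Finset.sum_congr rfl fun k _ => ?_
    simp only [ha_def]
    field_simp
  have hR : δ * ∑ j ∈ range K,
      (z (j:ℤ))^3 * ((z ((j:ℤ)+1) - 2 * z (j:ℤ) + z ((j:ℤ)-1)) / δ^2)^2 = Q / δ^3 := by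
    rw [hQ_def, Finset.mul_sum, Finset.sum_div]
    refine Finset.sum_congr rfl fun j _ => ?_
    simp only [ha_def]
    have : ((j:ℤ) + 1) - 1 = (j:ℤ) := by ring
    rw [this]
    field_simp
    ring
  rw [hL, hR]
  have heq : (9/4:ℝ) * (Q/δ^3) = ((9/4)*Q)/δ^3 := by ring
  rw [heq]
  exact (div_le_div_iff_of_pos_right (by positivity)).mpr hmain
end

section
/- Total variation of the derivative of the piecewise affine interpolant: with û as above, TV[û'] = ∑_{k=1}^{K−1} δ ((z_{k+1/2} − z_{k−1/2})/δ)² + ∑_{κ} δ z_κ |(z_{κ+1} − 2z_κ + z_{κ−1})/δ²|, and this is bounded by (5/2)(2(b−a))^{1/2} (δ ∑_κ z_κ³ ((z_{κ+1} − 2z_κ + z_{κ−1})/δ²)²)^{1/2}. -/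
set_option maxHeartbeats 1000000

open Set

/-- Total variation of a function on the open interval `(a,b)`, defined via the
supremum over finite increasing sequences of points in `(a,b)` of the sums of
absolute increments. -/
noncomputable def tvOn (a b : ℝ) (g : ℝ → ℝ) : ℝ :=
  sSup {s : ℝ | ∃ (J : ℕ) (r : ℕ → ℝ), (∀ j ≤ J, r j ∈ Ioo a b) ∧
    (∀ j < J, r j < r (j+1)) ∧ s = ∑ j ∈ Finset.range J, |g (r (j+1)) - g (r j)|}

private lemma sum_range_odd (f : ℕ → ℝ) (n : ℕ) :
    ∑ i ∈ Finset.range (2*n+1), f i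
      = ∑ l ∈ Finset.range (n+1), f (2*l) + ∑ l ∈ Finset.range n, f (2*l+1) := by
  induction n with
  | zero => simp
  | succ n ih =>
      have h1 : 2*(n+1)+1 = (2*n+1)+1+1 := by ring
      rw [h1, Finset.sum_range_succ, Finset.sum_range_succ, ih,
        Finset.sum_range_succ (fun l => f (2*l)) (n+1),
        Finset.sum_range_succ (fun l => f (2*l+1)) n]
      have h2 : 2*n+1+1 = 2*(n+1) := by ring
      rw [h2]
      ring

private lemma tvOn_step (N : ℕ) (hN : 1 ≤ N) (y : ℕ → ℝ)
    (hy : ∀ i < N, y i < y (i+1)) (V : ℕ → ℝ) (g : ℝ → ℝ)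
    (hg : ∀ i < N, ∀ t ∈ Ioc (y i) (y (i+1)), g t = V i) :
    tvOn (y 0) (y N) g = ∑ i ∈ Finset.range (N-1), |V (i+1) - V i| := by
  classical
  have ymono : ∀ j ≤ N, ∀ i < j, y i < y j := by
    intro j hj
    induction j with
    | zero => intro i hi; omega
    | succ n ih =>
        intro i hi
        have hn : y n < y (n+1) := hy n (by omega)
        rcases Nat.lt_succ_iff_lt_or_eq.mp hi with h | h
        · exact lt_trans (ih (by omega) i h) hn
        · subst h; exact hn
  have hN1 : N - 1 + 1 = N := by omega
  have hyN : y (N-1) < y N := by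
    have h := hy (N-1) (by omega); rwa [hN1] at h
  set T := ∑ i ∈ Finset.range (N-1), |V (i+1) - V i| with hT
  set σ : ℝ → ℕ := fun t => Nat.findGreatest (fun i => y i < t) (N-1) with hσ
  have hσle : ∀ t, σ t ≤ N - 1 := fun t => Nat.findGreatest_le _
  have hσspec : ∀ t ∈ Ioo (y 0) (y N), y (σ t) < t ∧ t ≤ y (σ t + 1) := by
    intro t ht
    constructor
    · have h1 : (fun i => y i < t) (Nat.findGreatest (fun i => y i < t) (N-1)) :=
        Nat.findGreatest_spec (P := fun i => y i < t) (Nat.zero_le (N-1)) ht.1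
      simpa [hσ] using h1
    by_cases h : σ t + 1 ≤ N - 1
    · exact not_lt.mp (Nat.findGreatest_is_greatest (Nat.lt_succ_self _) h)
    · have h2 : σ t + 1 = N := by have := hσle t; omega
      rw [h2]; exact ht.2.le
  have hσmono : ∀ {t t' : ℝ}, t ≤ t' → σ t ≤ σ t' :=
    fun h => Nat.findGreatest_mono (fun i hi => lt_of_lt_of_le hi h) le_rfl
  have hgσ : ∀ t ∈ Ioo (y 0) (y N), g t = V (σ t) := by
    intro t ht
    have h := hσspec t ht
    exact hg (σ t) (by have := hσle t; omega) t ⟨h.1, h.2⟩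
  have tele : ∀ p q : ℕ, p ≤ q →
      ∑ i ∈ Finset.Ico p q, (V (i+1) - V i) = V q - V p := by
    intro p q hpq
    rw [Finset.sum_Ico_eq_sub _ hpq, Finset.sum_range_sub, Finset.sum_range_sub]
    ring
  have hub : ∀ s ∈ {s : ℝ | ∃ (J : ℕ) (r : ℕ → ℝ), (∀ j ≤ J, r j ∈ Ioo (y 0) (y N)) ∧
      (∀ j < J, r j < r (j+1)) ∧ s = ∑ j ∈ Finset.range J, |g (r (j+1)) - g (r j)|},
      s ≤ T := by
    rintro s ⟨J, r, hr1, hr2, rfl⟩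
    have rmono : ∀ j ≤ J, ∀ i ≤ j, r i ≤ r j := by
      intro j hj
      induction j with
      | zero => intro i hi; have : i = 0 := by omega
                rw [this]
      | succ n ih =>
          intro i hi
          have hn : r n < r (n+1) := hr2 n (by omega)
          rcases Nat.le_succ_iff.mp hi with h | h
          · exact le_trans (ih (by omega) i h) hn.le
          · rw [h]
    have key : ∀ j < J, |g (r (j+1)) - g (r j)| ≤
        ∑ i ∈ Finset.Ico (σ (r j)) (σ (r (j+1))), |V (i+1) - V i| := by
      intro j hj
      have h1 : σ (r j) ≤ σ (r (j+1)) := hσmono (le_of_lt (hr2 j hj))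
      rw [hgσ _ (hr1 _ hj), hgσ _ (hr1 _ (by omega)), ← tele _ _ h1]
      exact Finset.abs_sum_le_sum_abs _ _
    have chain : ∀ J' ≤ J, ∑ j ∈ Finset.range J',
        (∑ i ∈ Finset.Ico (σ (r j)) (σ (r (j+1))), |V (i+1) - V i|)
        = ∑ i ∈ Finset.Ico (σ (r 0)) (σ (r J')), |V (i+1) - V i| := by
      intro J' hJ'
      induction J' with
      | zero => simp
      | succ n ih =>
          rw [Finset.sum_range_succ, ih (by omega)]
          exact Finset.sum_Ico_consecutive _
            (hσmono (rmono n (by omega) 0 (Nat.zero_le _)))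
            (hσmono (le_of_lt (hr2 n (by omega))))
    calc ∑ j ∈ Finset.range J, |g (r (j+1)) - g (r j)|
        ≤ ∑ j ∈ Finset.range J,
            ∑ i ∈ Finset.Ico (σ (r j)) (σ (r (j+1))), |V (i+1) - V i| :=
          Finset.sum_le_sum (fun j hj => key j (Finset.mem_range.mp hj))
      _ = ∑ i ∈ Finset.Ico (σ (r 0)) (σ (r J)), |V (i+1) - V i| := chain J le_rfl
      _ ≤ T := by
          rw [hT]
          apply Finset.sum_le_sum_of_subset_of_nonneg
          · intro i hi
            rw [Finset.mem_Ico] at hi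
            rw [Finset.mem_range]
            have := hσle (r J); omega
          · intro i _ _; exact abs_nonneg _
  have hTnn : 0 ≤ T := Finset.sum_nonneg (fun i _ => abs_nonneg _)
  have hmem : T ∈ {s : ℝ | ∃ (J : ℕ) (r : ℕ → ℝ), (∀ j ≤ J, r j ∈ Ioo (y 0) (y N)) ∧
      (∀ j < J, r j < r (j+1)) ∧ s = ∑ j ∈ Finset.range J, |g (r (j+1)) - g (r j)|} := by
    refine ⟨N-1, fun j => if j = N-1 then (y (N-1) + y N) / 2 else y (j+1), ?_, ?_, ?_⟩
    · intro j hj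
      beta_reduce
      by_cases hjN : j = N-1
      · rw [if_pos hjN]
        have h0 : y 0 ≤ y (N-1) := by
          rcases Nat.eq_zero_or_pos (N-1) with h | h
          · rw [h]
          · exact (ymono (N-1) (by omega) 0 h).le
        constructor
        · show y 0 < (y (N-1) + y N) / 2; linarith
        · show (y (N-1) + y N) / 2 < y N; linarith
      · rw [if_neg hjN]
        have hj' : j < N - 1 := by omega
        exact ⟨ymono (j+1) (by omega) 0 (by omega), ymono N le_rfl (j+1) (by omega)⟩
    · intro j hj
      beta_reduce
      have hjne : j ≠ N-1 := by omega
      rw [if_neg hjne]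
      by_cases h : j + 1 = N - 1
      · rw [if_pos h]
        have e : y (j+1) = y (N-1) := by rw [h]
        rw [e]; linarith
      · rw [if_neg h]
        exact hy (j+1) (by omega)
    · have hgr : ∀ j ≤ N-1,
          g (if j = N-1 then (y (N-1) + y N) / 2 else y (j+1)) = V j := by
        intro j hj
        by_cases hjN : j = N-1
        · rw [if_pos hjN, hjN]
          apply hg (N-1) (by omega)
          constructor
          · show y (N-1) < (y (N-1) + y N) / 2; linarith
          · rw [hN1]; show (y (N-1) + y N) / 2 ≤ y N; linarith
        · rw [if_neg hjN]
          exact hg j (by omega) _ ⟨hy j (by omega), le_rfl⟩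
      rw [hT]
      beta_reduce
      apply Finset.sum_congr rfl
      intro j hj
      have hj' : j < N - 1 := Finset.mem_range.mp hj
      rw [hgr (j+1) (by omega), hgr j (by omega)]
  rw [tvOn]
  exact le_antisymm (Real.sSup_le hub hTnn) (le_csSup ⟨T, hub⟩ hmem)

private lemma interp_ineq (K : ℕ) (w : ℕ → ℝ) (hw : ∀ j ≤ K+1, 0 < w j)
    (h0 : w 0 = w 1) (hK1 : w (K+1) = w K) :
    ∑ k ∈ Finset.range (K+1), w (k+1) * (w (k+1) - w k)^4
      ≤ (9/2) * ∑ j ∈ Finset.range K, (w (j+1))^3 * (w (j+2) - 2*w (j+1) + w j)^2 := by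
  set a : ℕ → ℝ := fun k => w (k+1) - w k with ha
  have ha0 : a 0 = 0 := by simp [ha, ← h0]
  have haK : a K = 0 := by simp [ha, hK1]
  set S1 : ℝ := ∑ k ∈ Finset.range (K+1), w (k+1) * (a k)^4 with hS1
  set S1' : ℝ := ∑ k ∈ Finset.range (K+1), w k * (a k)^4 with hS1'
  set S2 : ℝ := ∑ j ∈ Finset.range K, (w (j+1))^3 * (a (j+1) - a j)^2 with hS2
  have hgoalR : ∑ j ∈ Finset.range K, (w (j+1))^3 * (w (j+2) - 2*w (j+1) + w j)^2 = S2 :=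
    Finset.sum_congr rfl (fun j _ => by simp only [ha]; ring)
  rw [hgoalR]
  clear hgoalR
  -- Abel summation identity
  have hid : S1 + S1' = ∑ j ∈ Finset.range K, (w (j+1))^2 * ((a j)^3 - (a (j+1))^3) := by
    have e0 : S1 + S1' = ∑ k ∈ Finset.range (K+1),
        ((w (k+1))^2 * (a k)^3 - (w k)^2 * (a k)^3) := by
      rw [hS1, hS1', ← Finset.sum_add_distrib]
      exact Finset.sum_congr rfl (fun k _ => by simp only [ha]; ring)
    have e1 : ∑ k ∈ Finset.range (K+1), (w k)^2 * (a k)^3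
        = (∑ j ∈ Finset.range K, (w (j+1))^2 * (a (j+1))^3) + (w 0)^2 * (a 0)^3 :=
      Finset.sum_range_succ' _ K
    have e2 : ∑ k ∈ Finset.range (K+1), (w (k+1))^2 * (a k)^3
        = (∑ j ∈ Finset.range K, (w (j+1))^2 * (a j)^3) + (w (K+1))^2 * (a K)^3 :=
      Finset.sum_range_succ _ K
    rw [e0, Finset.sum_sub_distrib, e1, e2, ha0, haK]
    rw [show ((0:ℝ))^3 = 0 by ring]
    simp only [mul_zero, add_zero]
    rw [← Finset.sum_sub_distrib]
    exact Finset.sum_congr rfl (fun j _ => by ring)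
  set F : ℕ → ℝ := fun j => Real.sqrt ((w (j+1))^3) * |a (j+1) - a j| with hF
  set G : ℕ → ℝ := fun j => Real.sqrt (w (j+1)) *
      ((a (j+1))^2 + |a (j+1)| * |a j| + (a j)^2) with hG
  have hterm : ∀ j < K, (w (j+1))^2 * ((a j)^3 - (a (j+1))^3) ≤ F j * G j := by
    intro j hj
    have hwj : 0 < w (j+1) := hw _ (by omega)
    have hFG : F j * G j = (w (j+1))^2 *
        (|a (j+1) - a j| * ((a (j+1))^2 + |a (j+1)| * |a j| + (a j)^2)) := by
      simp only [hF, hG]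
      rw [mul_mul_mul_comm, ← Real.sqrt_mul (pow_nonneg hwj.le 3),
        show (w (j+1))^3 * w (j+1) = ((w (j+1))^2)^2 by ring,
        Real.sqrt_sq (by positivity)]
    rw [hFG]
    apply mul_le_mul_of_nonneg_left ?_ (by positivity)
    have h1 : (a j)^3 - (a (j+1))^3 ≤ |(a j)^3 - (a (j+1))^3| := le_abs_self _
    have h2 : |(a j)^3 - (a (j+1))^3| = |a (j+1) - a j| *
        |(a (j+1))^2 + a (j+1) * a j + (a j)^2| := by
      have e : (a j)^3 - (a (j+1))^3
          = (a j - a (j+1)) * ((a (j+1))^2 + a (j+1) * a j + (a j)^2) := by ring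
      rw [e, abs_mul, abs_sub_comm]
    have h3 : |(a (j+1))^2 + a (j+1) * a j + (a j)^2|
        ≤ (a (j+1))^2 + |a (j+1)| * |a j| + (a j)^2 := by
      rw [← abs_mul]
      rw [abs_le]
      constructor
      · nlinarith [neg_abs_le (a (j+1) * a j), sq_nonneg (a (j+1)), sq_nonneg (a j),
          abs_nonneg (a (j+1) * a j)]
      · nlinarith [le_abs_self (a (j+1) * a j)]
    calc (a j)^3 - (a (j+1))^3 ≤ |a (j+1) - a j| *
        |(a (j+1))^2 + a (j+1) * a j + (a j)^2| := by rw [← h2]; exact h1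
      _ ≤ |a (j+1) - a j| * ((a (j+1))^2 + |a (j+1)| * |a j| + (a j)^2) :=
          mul_le_mul_of_nonneg_left h3 (abs_nonneg _)
  have hM1 : S1 + S1' ≤ ∑ j ∈ Finset.range K, F j * G j := by
    rw [hid]
    exact Finset.sum_le_sum (fun j hj => hterm j (Finset.mem_range.mp hj))
  have hcs : (∑ j ∈ Finset.range K, F j * G j)^2
      ≤ (∑ j ∈ Finset.range K, (F j)^2) * (∑ j ∈ Finset.range K, (G j)^2) :=
    Finset.sum_mul_sq_le_sq_mul_sq _ F G
  have hF2 : ∑ j ∈ Finset.range K, (F j)^2 = S2 := by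
    apply Finset.sum_congr rfl
    intro j hj
    have hwj : 0 < w (j+1) := hw _ (by have := Finset.mem_range.mp hj; omega)
    simp only [hF]
    rw [mul_pow, Real.sq_sqrt (pow_nonneg hwj.le 3), sq_abs]
  have hG2 : ∑ j ∈ Finset.range K, (G j)^2 ≤ (9/2) * (S1 + S1') := by
    have step : ∀ j < K, (G j)^2 ≤ (9/2) * (w (j+1) * (a (j+1))^4 + w (j+1) * (a j)^4) := by
      intro j hj
      have hwj : 0 < w (j+1) := hw _ (by omega)
      simp only [hG]
      rw [mul_pow, Real.sq_sqrt hwj.le]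
      have habs4 : (a (j+1))^4 = |a (j+1)|^4 := by rw [← abs_pow, abs_of_nonneg (by positivity)]
      have habs4' : (a j)^4 = |a j|^4 := by rw [← abs_pow, abs_of_nonneg (by positivity)]
      have hsq : (a (j+1))^2 = |a (j+1)|^2 := (sq_abs _).symm
      have hsq' : (a j)^2 = |a j|^2 := (sq_abs _).symm
      rw [hsq, hsq', habs4, habs4']
      have key : (|a (j+1)|^2 + |a (j+1)| * |a j| + |a j|^2)^2
          ≤ (9/2) * (|a (j+1)|^4 + |a j|^4) := by
        set u := |a (j+1)|; set v := |a j|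
        have hu : 0 ≤ u := abs_nonneg _
        have hv : 0 ≤ v := abs_nonneg _
        nlinarith [sq_nonneg (u - v), sq_nonneg (u + v), sq_nonneg (u^2 - v^2),
          sq_nonneg (u*v), mul_nonneg hu hv, sq_nonneg (u^2 + v^2 - 2*u*v),
          mul_nonneg (mul_nonneg hu hu) (mul_nonneg hv hv)]
      calc w (j+1) * (|a (j+1)|^2 + |a (j+1)| * |a j| + |a j|^2)^2
          ≤ w (j+1) * ((9/2) * (|a (j+1)|^4 + |a j|^4)) :=
            mul_le_mul_of_nonneg_left key hwj.le
        _ = (9/2) * (w (j+1) * |a (j+1)|^4 + w (j+1) * |a j|^4) := by ring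
    have e1 : ∑ j ∈ Finset.range K, w (j+1) * (a (j+1))^4 = S1' := by
      rw [hS1', Finset.sum_range_succ' (fun k => w k * (a k)^4) K, ha0]
      simp
    have e2 : ∑ j ∈ Finset.range K, w (j+1) * (a j)^4 = S1 := by
      rw [hS1, Finset.sum_range_succ, haK]
      simp
    calc ∑ j ∈ Finset.range K, (G j)^2
        ≤ ∑ j ∈ Finset.range K, (9/2) * (w (j+1) * (a (j+1))^4 + w (j+1) * (a j)^4) :=
          Finset.sum_le_sum (fun j hj => step j (Finset.mem_range.mp hj))
      _ = (9/2) * ((∑ j ∈ Finset.range K, w (j+1) * (a (j+1))^4)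
            + ∑ j ∈ Finset.range K, w (j+1) * (a j)^4) := by
          rw [← Finset.sum_add_distrib, ← Finset.mul_sum]
      _ = (9/2) * (S1 + S1') := by rw [e1, e2]; ring
  have hS1nn : 0 ≤ S1 := Finset.sum_nonneg (fun k hk => by
    have h := hw (k+1) (by have := Finset.mem_range.mp hk; omega)
    exact mul_nonneg h.le (by positivity))
  have hS1'nn : 0 ≤ S1' := Finset.sum_nonneg (fun k hk => by
    have h := hw k (by have := Finset.mem_range.mp hk; omega)
    exact mul_nonneg h.le (by positivity))
  have hS2nn : 0 ≤ S2 := Finset.sum_nonneg (fun j hj => by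
    have h := hw (j+1) (by have := Finset.mem_range.mp hj; omega)
    exact mul_nonneg (pow_nonneg h.le 3) (sq_nonneg _))
  have hFGnn : 0 ≤ ∑ j ∈ Finset.range K, F j * G j := le_trans (by linarith) hM1
  have hMsq : (S1 + S1')^2 ≤ S2 * ((9/2) * (S1 + S1')) := by
    calc (S1 + S1')^2 ≤ (∑ j ∈ Finset.range K, F j * G j)^2 := by
          apply pow_le_pow_left₀ (by linarith) hM1
      _ ≤ (∑ j ∈ Finset.range K, (F j)^2) * (∑ j ∈ Finset.range K, (G j)^2) := hcs
      _ ≤ S2 * ((9/2) * (S1 + S1')) := by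
          rw [hF2]
          apply mul_le_mul_of_nonneg_left hG2 hS2nn
  clear hM1 hcs hF2 hG2 hid ha0 haK hterm hF hG hS1 hS1' hS2 ha hFGnn
  clear_value S1 S1' S2 F G a
  clear F G a w hw h0 hK1
  rcases (by linarith : (0:ℝ) ≤ S1 + S1').eq_or_lt with h | h
  · have h1 : S1 = 0 := by linarith
    rw [h1]; linarith
  · have h2 : (S1 + S1') * (S1 + S1') ≤ ((9/2) * S2) * (S1 + S1') := by nlinarith [hMsq]
    have h3 := le_of_mul_le_mul_right h2 h
    linarith

theorem stmt18 (K : ℕ) (hK : 2 ≤ K) (a b δ : ℝ) (hab : a < b) (hδ : 0 < δ)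
    (x : ℕ → ℝ) (hx : ∀ i < K, x i < x (i+1)) (ha : x 0 = a) (hb : x K = b)
    (z : ℤ → ℝ) (hz : ∀ j : ℕ, j < K → z (j : ℤ) = δ / (x (j+1) - x j))
    (hlo : z (-1) = z 0) (hhi : z (K : ℤ) = z ((K : ℤ) - 1))
    (m : ℕ → ℝ) (hm : ∀ j, m j = (x j + x (j+1)) / 2)
    (g : ℝ → ℝ)
    (hga : ∀ t ∈ Ioc a (m 0), g t = 0)
    (hgb : ∀ t ∈ Ioc (m (K-1)) b, g t = 0)
    (hg1 : ∀ k ∈ Finset.Icc 1 (K-1), ∀ t ∈ Ioc (m (k-1)) (x k),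
      g t = z ((k : ℤ) - 1) * ((z (k : ℤ) - z ((k : ℤ) - 1)) / δ))
    (hg2 : ∀ k ∈ Finset.Icc 1 (K-1), ∀ t ∈ Ioc (x k) (m k),
      g t = z (k : ℤ) * ((z (k : ℤ) - z ((k : ℤ) - 1)) / δ)) :
    tvOn a b g =
        ∑ k ∈ Finset.Icc 1 (K-1), δ * ((z (k : ℤ) - z ((k : ℤ) - 1)) / δ)^2 +
          ∑ j ∈ Finset.range K,
            δ * z (j : ℤ) * |(z ((j : ℤ) + 1) - 2 * z (j : ℤ) + z ((j : ℤ) - 1)) / δ^2| ∧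
      ∑ k ∈ Finset.Icc 1 (K-1), δ * ((z (k : ℤ) - z ((k : ℤ) - 1)) / δ)^2 +
          ∑ j ∈ Finset.range K,
            δ * z (j : ℤ) * |(z ((j : ℤ) + 1) - 2 * z (j : ℤ) + z ((j : ℤ) - 1)) / δ^2| ≤
        (5/2) * Real.sqrt (2 * (b - a)) *
          Real.sqrt (δ * ∑ j ∈ Finset.range K,
            (z (j : ℤ))^3 * ((z ((j : ℤ) + 1) - 2 * z (j : ℤ) + z ((j : ℤ) - 1)) / δ^2)^2) := by
  classical
  have hδ' : δ ≠ 0 := ne_of_gt hδ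
  have hKpos : 0 < K := by omega
  set w : ℕ → ℝ := fun n => z ((n : ℤ) - 1) with hwdef
  have hzw : ∀ k : ℕ, z (k : ℤ) = w (k+1) := by
    intro k; simp only [hwdef]; congr 1; push_cast; ring
  have hzw' : ∀ k : ℕ, z ((k : ℤ) - 1) = w k := by
    intro k; simp only [hwdef]
  have hzw2 : ∀ k : ℕ, z ((k : ℤ) + 1) = w (k+2) := by
    intro k; simp only [hwdef]; congr 1; push_cast; ring
  have hww : ∀ j, j < K → w (j+1) = δ / (x (j+1) - x j) := by
    intro j hj; rw [← hzw j]; exact hz j hj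
  have hw0 : w 0 = w 1 := by
    simp only [hwdef]; norm_num; exact hlo
  have hwK1 : w (K+1) = w K := by
    have e : ((K+1 : ℕ) : ℤ) - 1 = (K : ℤ) := by push_cast; ring
    simp only [hwdef, e]; exact hhi
  have hzpos : ∀ j, j < K → 0 < w (j+1) := by
    intro j hj; rw [hww j hj]; exact div_pos hδ (sub_pos.mpr (hx j hj))
  have hwpos : ∀ j ≤ K+1, 0 < w j := by
    intro j hj
    by_cases h0 : j = 0
    · subst h0; rw [hw0]; exact hzpos 0 hKpos
    · by_cases hK1 : j = K+1
      · subst hK1; rw [hwK1, show K = (K-1)+1 by omega]; exact hzpos (K-1) (by omega)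
      · rw [show j = (j-1)+1 by omega]; exact hzpos (j-1) (by omega)
  -- the piecewise structure
  set y : ℕ → ℝ := fun i => if i % 2 = 0 then x (i / 2) else m (i / 2) with hydef
  set V : ℕ → ℝ := fun i => if i % 2 = 0 then w (i/2+1) * ((w (i/2+1) - w (i/2)) / δ)
      else w (i/2+1) * ((w (i/2+2) - w (i/2+1)) / δ) with hVdef
  have hye : ∀ l, y (2*l) = x l := by
    intro l
    have h1 : (2*l) % 2 = 0 := by omega
    have h2 : (2*l) / 2 = l := by omega
    simp [hydef, h1, h2]
  have hyo : ∀ l, y (2*l+1) = m l := by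
    intro l
    have h1 : (2*l+1) % 2 = 1 := by omega
    have h2 : (2*l+1) / 2 = l := by omega
    simp [hydef, h1, h2]
  have hVe : ∀ l, V (2*l) = w (l+1) * ((w (l+1) - w l) / δ) := by
    intro l
    have h1 : (2*l) % 2 = 0 := by omega
    have h2 : (2*l) / 2 = l := by omega
    simp [hVdef, h1, h2]
  have hVo : ∀ l, V (2*l+1) = w (l+1) * ((w (l+2) - w (l+1)) / δ) := by
    intro l
    have h1 : (2*l+1) % 2 = 1 := by omega
    have h2 : (2*l+1) / 2 = l := by omega
    simp [hVdef, h1, h2]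
  have hy0 : y 0 = a := by
    have := hye 0
    simpa using this.trans ha
  have hyb : y (2*K) = b := (hye K).trans hb
  have hmono : ∀ i < 2*K, y i < y (i+1) := by
    have hme : ∀ l, l < K → y (2*l) < y (2*l+1) := by
      intro l hl; rw [hye l, hyo l, hm l]; have := hx l hl; linarith
    have hmo : ∀ l, l < K → y (2*l+1) < y (2*l+2) := by
      intro l hl
      rw [hyo l, show 2*l+2 = 2*(l+1) by ring, hye (l+1), hm l]
      have := hx l hl; linarith
    intro i hi
    rcases Nat.even_or_odd i with h | h
    · obtain ⟨l, hl⟩ := h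
      have e : i = 2*l := by omega
      subst e
      exact hme l (by omega)
    · obtain ⟨l, hl⟩ := h
      have e : i = 2*l+1 := by omega
      subst e
      rw [show 2*l+1+1 = 2*l+2 from rfl]
      exact hmo l (by omega)
  have hpieces : ∀ i < 2*K, ∀ t ∈ Ioc (y i) (y (i+1)), g t = V i := by
    intro i hi t ht
    rcases Nat.even_or_odd i with h | h
    · obtain ⟨l, hl⟩ := h
      have e : i = 2*l := by omega
      subst e
      have hlK : l < K := by omega
      rw [hye l, hyo l] at ht
      rw [hVe l]
      by_cases hl0 : l = 0
      · subst hl0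
        rw [ha] at ht
        rw [hga t ht]
        simp [hw0]
      · have hmem : l ∈ Finset.Icc 1 (K-1) := Finset.mem_Icc.mpr ⟨by omega, by omega⟩
        rw [hg2 l hmem t ht, hzw l, hzw' l]
    · obtain ⟨l, hl⟩ := h
      have e : i = 2*l+1 := by omega
      subst e
      have hlK : l < K := by omega
      rw [show 2*l+1+1 = 2*(l+1) by ring] at ht
      rw [hyo l, hye (l+1)] at ht
      rw [hVo l]
      by_cases hlK1 : l = K-1
      · subst hlK1
        rw [show K-1+1 = K by omega, show K-1+2 = K+1 by omega, hwK1]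
        rw [show K-1+1 = K by omega, hb] at ht
        rw [hgb t ht]
        simp
      · have hmem : l+1 ∈ Finset.Icc 1 (K-1) := Finset.mem_Icc.mpr ⟨by omega, by omega⟩
        have h1 := hg1 (l+1) hmem t (by rw [show l+1-1 = l by omega]; exact ht)
        rw [h1, hzw' (l+1), hzw (l+1), show l+1+1 = l+2 from rfl]
  have hstep := tvOn_step (2*K) (by omega) y hmono V g hpieces
  rw [hy0, hyb] at hstep
  rw [show 2*K-1 = 2*(K-1)+1 by omega] at hstep
  rw [sum_range_odd (fun i => |V (i+1) - V i|) (K-1)] at hstep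
  rw [show K-1+1 = K by omega] at hstep
  have hBsum : ∑ l ∈ Finset.range K, |V (2*l+1) - V (2*l)|
      = ∑ j ∈ Finset.range K, δ * w (j+1) * |(w (j+2) - 2*w (j+1) + w j)/δ^2| := by
    apply Finset.sum_congr rfl
    intro l hl
    have hwl : 0 < w (l+1) := hzpos l (Finset.mem_range.mp hl)
    rw [hVo l, hVe l]
    rw [show w (l+1) * ((w (l+2) - w (l+1))/δ) - w (l+1) * ((w (l+1) - w l)/δ)
        = w (l+1) * ((w (l+2) - 2*w (l+1) + w l)/δ) by ring]
    rw [abs_mul, abs_div, abs_of_pos hwl, abs_of_pos hδ, abs_div,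
      abs_of_pos (pow_pos hδ 2)]
    field_simp
  have hAsum : ∑ l ∈ Finset.range (K-1), |V (2*l+1+1) - V (2*l+1)|
      = ∑ l ∈ Finset.range (K-1), δ * ((w (l+2) - w (l+1))/δ)^2 := by
    apply Finset.sum_congr rfl
    intro l hl
    rw [show 2*l+1+1 = 2*(l+1) by ring, hVe (l+1), hVo l,
      show l+1+1 = l+2 from rfl]
    rw [show w (l+2) * ((w (l+2) - w (l+1))/δ) - w (l+1) * ((w (l+2) - w (l+1))/δ)
        = δ * ((w (l+2) - w (l+1))/δ)^2 by field_simp]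
    exact abs_of_nonneg (mul_nonneg hδ.le (sq_nonneg _))
  have hAicc : ∑ k ∈ Finset.Icc 1 (K-1), δ * ((w (k+1) - w k)/δ)^2
      = ∑ l ∈ Finset.range (K-1), δ * ((w (l+2) - w (l+1))/δ)^2 := by
    rw [show Finset.Icc 1 (K-1) = Finset.Ico 1 K by
      rw [← Finset.Ico_add_one_right_eq_Icc]; congr 1; omega]
    rw [Finset.sum_Ico_eq_sum_range]
    apply Finset.sum_congr rfl
    intro i _
    rw [show 1+i+1 = i+2 by omega, show 1+i = i+1 by omega]
  have hconv1 : ∑ k ∈ Finset.Icc 1 (K-1), δ * ((z (k:ℤ) - z ((k:ℤ) - 1))/δ)^2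
      = ∑ k ∈ Finset.Icc 1 (K-1), δ * ((w (k+1) - w k)/δ)^2 :=
    Finset.sum_congr rfl (fun k _ => by rw [hzw k, hzw' k])
  have hconv2 : ∑ j ∈ Finset.range K,
        δ * z (j:ℤ) * |(z ((j:ℤ)+1) - 2*z (j:ℤ) + z ((j:ℤ)-1))/δ^2|
      = ∑ j ∈ Finset.range K, δ * w (j+1) * |(w (j+2) - 2*w (j+1) + w j)/δ^2| :=
    Finset.sum_congr rfl (fun j _ => by rw [hzw2 j, hzw j, hzw' j])
  have hconv3 : (∑ j ∈ Finset.range K,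
        (z (j:ℤ))^3 * ((z ((j:ℤ)+1) - 2*z (j:ℤ) + z ((j:ℤ)-1))/δ^2)^2)
      = ∑ j ∈ Finset.range K, (w (j+1))^3 * ((w (j+2) - 2*w (j+1) + w j)/δ^2)^2 :=
    Finset.sum_congr rfl (fun j _ => by rw [hzw2 j, hzw j, hzw' j])
  constructor
  · rw [hconv1, hconv2, hAicc, hstep, hBsum, hAsum]
    exact add_comm _ _
  · rw [hconv1, hconv2, hconv3]
    set A := ∑ k ∈ Finset.Icc 1 (K-1), δ * ((w (k+1) - w k)/δ)^2 with hAdef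
    set B := ∑ j ∈ Finset.range K, δ * w (j+1) * |(w (j+2) - 2*w (j+1) + w j)/δ^2|
      with hBdef
    set S := δ * ∑ j ∈ Finset.range K,
      (w (j+1))^3 * ((w (j+2) - 2*w (j+1) + w j)/δ^2)^2 with hSdef
    have hban : (0:ℝ) ≤ b - a := by linarith
    have hSnn : 0 ≤ S := by
      rw [hSdef]
      exact mul_nonneg hδ.le (Finset.sum_nonneg fun j hj =>
        mul_nonneg (pow_nonneg (hzpos j (Finset.mem_range.mp hj)).le 3) (sq_nonneg _))
    have hP : ∑ j ∈ Finset.range K, δ / w (j+1) = b - a := by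
      have e : ∀ j ∈ Finset.range K, δ / w (j+1) = x (j+1) - x j := by
        intro j hj
        have hj' := Finset.mem_range.mp hj
        have hd : (0:ℝ) < x (j+1) - x j := sub_pos.mpr (hx j hj')
        rw [hww j hj']
        field_simp
      rw [Finset.sum_congr rfl e, Finset.sum_range_sub x K, hb, ha]
    have hR2 : (Real.sqrt (2*(b-a)) * Real.sqrt S)^2 = 2*(b-a)*S := by
      rw [mul_pow, Real.sq_sqrt (by linarith), Real.sq_sqrt hSnn]
    have hRnn : 0 ≤ Real.sqrt (2*(b-a)) * Real.sqrt S :=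
      mul_nonneg (Real.sqrt_nonneg _) (Real.sqrt_nonneg _)
    have hSalt : S = (∑ j ∈ Finset.range K,
        (w (j+1))^3 * (w (j+2) - 2*w (j+1) + w j)^2) / δ^3 := by
      rw [hSdef, Finset.mul_sum, Finset.sum_div]
      apply Finset.sum_congr rfl
      intro j _
      field_simp
    have hinterp := interp_ineq K w hwpos hw0 hwK1
    -- bound for A
    have hsubA : Finset.Icc 1 (K-1) ⊆ Finset.range K := by
      intro k hk
      have := Finset.mem_Icc.mp hk
      exact Finset.mem_range.mpr (by omega)
    have hsubA2 : Finset.Icc 1 (K-1) ⊆ Finset.range (K+1) := by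
      intro k hk
      have := Finset.mem_Icc.mp hk
      exact Finset.mem_range.mpr (by omega)
    have hA : A ≤ (3/2) * (Real.sqrt (2*(b-a)) * Real.sqrt S) := by
      have hterm : ∀ k ∈ Finset.Icc 1 (K-1), δ * ((w (k+1) - w k)/δ)^2
          = Real.sqrt (δ / w (k+1)) * Real.sqrt (w (k+1) * (w (k+1) - w k)^4 / δ^3) := by
        intro k hk
        obtain ⟨hk1, hk2⟩ := Finset.mem_Icc.mp hk
        have hwk : 0 < w (k+1) := hwpos (k+1) (by omega)
        rw [← Real.sqrt_mul (div_nonneg hδ.le hwk.le)]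
        rw [show δ / w (k+1) * (w (k+1) * (w (k+1) - w k)^4 / δ^3)
            = (δ * ((w (k+1) - w k)/δ)^2)^2 by field_simp]
        rw [Real.sqrt_sq (mul_nonneg hδ.le (sq_nonneg _))]
      have hAeq : A = ∑ k ∈ Finset.Icc 1 (K-1),
          Real.sqrt (δ / w (k+1)) * Real.sqrt (w (k+1) * (w (k+1) - w k)^4 / δ^3) := by
        rw [hAdef]; exact Finset.sum_congr rfl hterm
      have h1 : ∑ k ∈ Finset.Icc 1 (K-1), (Real.sqrt (δ / w (k+1)))^2 ≤ b - a := by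
        have e : ∀ k ∈ Finset.Icc 1 (K-1), (Real.sqrt (δ / w (k+1)))^2 = δ / w (k+1) := by
          intro k hk
          obtain ⟨hk1, hk2⟩ := Finset.mem_Icc.mp hk
          exact Real.sq_sqrt (div_nonneg hδ.le (hwpos (k+1) (by omega)).le)
        rw [Finset.sum_congr rfl e, ← hP]
        apply Finset.sum_le_sum_of_subset_of_nonneg hsubA
        intro j hj _
        exact div_nonneg hδ.le (hwpos (j+1) (by have := Finset.mem_range.mp hj; omega)).le
      have h2 : ∑ k ∈ Finset.Icc 1 (K-1),
          (Real.sqrt (w (k+1) * (w (k+1) - w k)^4 / δ^3))^2 ≤ (9/2) * S := by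
        have e : ∀ k ∈ Finset.Icc 1 (K-1),
            (Real.sqrt (w (k+1) * (w (k+1) - w k)^4 / δ^3))^2
            = w (k+1) * (w (k+1) - w k)^4 / δ^3 := by
          intro k hk
          obtain ⟨hk1, hk2⟩ := Finset.mem_Icc.mp hk
          exact Real.sq_sqrt (div_nonneg
            (mul_nonneg (hwpos (k+1) (by omega)).le (by positivity)) (by positivity))
        rw [Finset.sum_congr rfl e]
        calc ∑ k ∈ Finset.Icc 1 (K-1), w (k+1) * (w (k+1) - w k)^4 / δ^3
            ≤ ∑ k ∈ Finset.range (K+1), w (k+1) * (w (k+1) - w k)^4 / δ^3 := by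
              apply Finset.sum_le_sum_of_subset_of_nonneg hsubA2
              intro k hk _
              have hwk : 0 < w (k+1) := hwpos (k+1)
                (by have := Finset.mem_range.mp hk; omega)
              exact div_nonneg (mul_nonneg hwk.le (by positivity)) (by positivity)
          _ = (∑ k ∈ Finset.range (K+1), w (k+1) * (w (k+1) - w k)^4) / δ^3 :=
              (Finset.sum_div _ _ _).symm
          _ ≤ ((9/2) * ∑ j ∈ Finset.range K,
                (w (j+1))^3 * (w (j+2) - 2*w (j+1) + w j)^2) / δ^3 := by
              gcongr
          _ = (9/2) * S := by rw [hSalt]; ring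
      have hAnn : 0 ≤ A := by
        rw [hAdef]
        exact Finset.sum_nonneg fun k _ => mul_nonneg hδ.le (sq_nonneg _)
      have hcsA : A^2 ≤ (b-a) * ((9/2) * S) := by
        rw [hAeq]
        calc (∑ k ∈ Finset.Icc 1 (K-1),
              Real.sqrt (δ / w (k+1)) * Real.sqrt (w (k+1) * (w (k+1) - w k)^4 / δ^3))^2
            ≤ (∑ k ∈ Finset.Icc 1 (K-1), (Real.sqrt (δ / w (k+1)))^2) *
              (∑ k ∈ Finset.Icc 1 (K-1),
                (Real.sqrt (w (k+1) * (w (k+1) - w k)^4 / δ^3))^2) :=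
              Finset.sum_mul_sq_le_sq_mul_sq _ _ _
          _ ≤ (b-a) * ((9/2) * S) := by
              apply mul_le_mul h1 h2 (Finset.sum_nonneg fun k _ => sq_nonneg _) hban
      have h32 : ((3/2) * (Real.sqrt (2*(b-a)) * Real.sqrt S))^2 = (b-a) * ((9/2) * S) := by
        rw [mul_pow, hR2]; ring
      have hfin := Real.sqrt_le_sqrt (hcsA.trans_eq h32.symm)
      rwa [Real.sqrt_sq hAnn, Real.sqrt_sq (mul_nonneg (by norm_num) hRnn)] at hfin
    have hB : B ≤ Real.sqrt (2*(b-a)) * Real.sqrt S := by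
      have hterm : ∀ j ∈ Finset.range K, δ * w (j+1) * |(w (j+2) - 2*w (j+1) + w j)/δ^2|
          = Real.sqrt (δ / w (j+1)) *
            Real.sqrt (δ * (w (j+1))^3 * ((w (j+2) - 2*w (j+1) + w j)/δ^2)^2) := by
        intro j hj
        have hwj : 0 < w (j+1) := hzpos j (Finset.mem_range.mp hj)
        rw [← Real.sqrt_mul (div_nonneg hδ.le hwj.le)]
        rw [show δ / w (j+1) * (δ * (w (j+1))^3 * ((w (j+2) - 2*w (j+1) + w j)/δ^2)^2)
            = (δ * w (j+1) * |(w (j+2) - 2*w (j+1) + w j)/δ^2|)^2 by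
          rw [mul_pow, mul_pow, sq_abs]; field_simp]
        rw [Real.sqrt_sq (mul_nonneg (mul_nonneg hδ.le hwj.le) (abs_nonneg _))]
      have hBeq : B = ∑ j ∈ Finset.range K, Real.sqrt (δ / w (j+1)) *
          Real.sqrt (δ * (w (j+1))^3 * ((w (j+2) - 2*w (j+1) + w j)/δ^2)^2) := by
        rw [hBdef]; exact Finset.sum_congr rfl hterm
      have h1 : ∑ j ∈ Finset.range K, (Real.sqrt (δ / w (j+1)))^2 = b - a := by
        rw [← hP]
        apply Finset.sum_congr rfl
        intro j hj
        exact Real.sq_sqrt (div_nonneg hδ.le (hzpos j (Finset.mem_range.mp hj)).le)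
      have h2 : ∑ j ∈ Finset.range K,
          (Real.sqrt (δ * (w (j+1))^3 * ((w (j+2) - 2*w (j+1) + w j)/δ^2)^2))^2 = S := by
        have e : ∀ j ∈ Finset.range K,
            (Real.sqrt (δ * (w (j+1))^3 * ((w (j+2) - 2*w (j+1) + w j)/δ^2)^2))^2
            = δ * (w (j+1))^3 * ((w (j+2) - 2*w (j+1) + w j)/δ^2)^2 := by
          intro j hj
          have hwj : 0 < w (j+1) := hzpos j (Finset.mem_range.mp hj)
          exact Real.sq_sqrt (mul_nonneg (mul_nonneg hδ.le (by positivity)) (sq_nonneg _))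
        rw [Finset.sum_congr rfl e, hSdef, Finset.mul_sum]
        exact Finset.sum_congr rfl fun j _ => by ring
      have hBnn : 0 ≤ B := by
        rw [hBdef]
        exact Finset.sum_nonneg fun j hj => mul_nonneg
          (mul_nonneg hδ.le (hzpos j (Finset.mem_range.mp hj)).le) (abs_nonneg _)
      have hcsB : B^2 ≤ 2*(b-a)*S := by
        rw [hBeq]
        calc (∑ j ∈ Finset.range K, Real.sqrt (δ / w (j+1)) *
              Real.sqrt (δ * (w (j+1))^3 * ((w (j+2) - 2*w (j+1) + w j)/δ^2)^2))^2
            ≤ (∑ j ∈ Finset.range K, (Real.sqrt (δ / w (j+1)))^2) *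
              (∑ j ∈ Finset.range K,
                (Real.sqrt (δ * (w (j+1))^3 * ((w (j+2) - 2*w (j+1) + w j)/δ^2)^2))^2) :=
              Finset.sum_mul_sq_le_sq_mul_sq _ _ _
          _ = (b-a) * S := by rw [h1, h2]
          _ ≤ 2*(b-a)*S := by nlinarith
      have hfin := Real.sqrt_le_sqrt (hcsB.trans_eq hR2.symm)
      rwa [Real.sqrt_sq hBnn, Real.sqrt_sq hRnn] at hfin
    calc A + B ≤ (3/2) * (Real.sqrt (2*(b-a)) * Real.sqrt S)
          + Real.sqrt (2*(b-a)) * Real.sqrt S := add_le_add hA hB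
      _ = 5/2 * Real.sqrt (2*(b-a)) * Real.sqrt S := by ring
end
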